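/- arXiv:1910.00642 — 6 statements merged into one kernel-verified Lean document; each statement's English description precedes it below -/
import Mathlib

section
/- Let θ be a theta graph (a subdivision of the multigraph with two vertices joined by three parallel edges), with subdivided edges P₁, P₂, P₃ (three internally disjoint paths between the two branch vertices). If a vertex set A meets at least two of the three subdivided edges, then θ contains a cycle of even length passing through a vertex of A. -/
/-!
Two of the three path lengths have the same parity, so the two corresponding paths close up to an
even cycle; since `A` meets two of the three paths, any two of them contain a vertex of `A`.
-/

namespace SimpleGraph.Walk

variable {V : Type*} {G : SimpleGraph V} {u v : V}

lemma IsPath.start_notMem_support_tail {p : G.Walk u v} (hp : p.IsPath) :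
    u ∉ p.support.tail :=
  (List.nodup_cons.mp (p.cons_tail_support ▸ hp.support_nodup)).1

lemma IsPath.isCycle_append_reverse {p q : G.Walk u v} (hp : p.IsPath) (hq : q.IsPath)
    (hpq : ∀ w, w ∈ p.support → w ∈ q.support → w = u ∨ w = v)
    (hlen : 1 < p.length ∨ 1 < q.length) :
    (p.append q.reverse).IsCycle := by
  refine hp.isCycle_append hq.reverse (fun w hwp hwq ↦ ?_) (by simpa using hlen)
  have hwq' : w ∈ q.support := by simpa using List.mem_of_mem_tail hwq
  rcases hpq w (List.mem_of_mem_tail hwp) hwq' with rfl | rfl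
  · exact hp.start_notMem_support_tail hwp
  · exact hq.reverse.start_notMem_support_tail hwq

lemma exists_even_isCycle_of_internallyDisjoint (A : Set V) {p q : G.Walk u v}
    (hp : p.IsPath) (hq : q.IsPath)
    (hpq : ∀ w, w ∈ p.support → w ∈ q.support → w = u ∨ w = v)
    (hlen : 1 < p.length ∨ 1 < q.length) (heven : Even (p.length + q.length))
    (hA : (∃ a ∈ A, a ∈ p.support) ∨ (∃ a ∈ A, a ∈ q.support)) :
    ∃ (w : V) (c : G.Walk w w), c.IsCycle ∧ Even c.length ∧ (∃ a ∈ A, a ∈ c.support) ∧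
      ∀ e ∈ c.edges, e ∈ p.edges ∨ e ∈ q.edges := by
  refine ⟨u, p.append q.reverse, hp.isCycle_append_reverse hq hpq hlen, by simpa using heven,
    ?_, by simp⟩
  rcases hA with ⟨a, ha, hap⟩ | ⟨a, ha, haq⟩
  · exact ⟨a, ha, by simp [hap]⟩
  · exact ⟨a, ha, by simp [haq]⟩

end SimpleGraph.Walk

lemma even_add_pair_of_two_of_three (l₁ l₂ l₃ : ℕ) {a₁ a₂ a₃ : Prop}
    (h : (a₁ ∧ a₂) ∨ (a₂ ∧ a₃) ∨ (a₃ ∧ a₁)) :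
    (Even (l₁ + l₂) ∧ (a₁ ∨ a₂)) ∨ (Even (l₂ + l₃) ∧ (a₂ ∨ a₃)) ∨
      (Even (l₃ + l₁) ∧ (a₃ ∨ a₁)) := by
  simp only [Nat.even_add]
  tauto

theorem theta_contains_even_A_cycle_general {V : Type*} (G : SimpleGraph V) (A : Set V)
    (u v : V)
    (P1 P2 P3 : G.Walk u v)
    (hP1 : P1.IsPath) (hP2 : P2.IsPath) (hP3 : P3.IsPath)
    -- the three paths are internally disjoint
    (h12 : ∀ w, w ∈ P1.support → w ∈ P2.support → w = u ∨ w = v)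
    (h23 : ∀ w, w ∈ P2.support → w ∈ P3.support → w = u ∨ w = v)
    (h31 : ∀ w, w ∈ P3.support → w ∈ P1.support → w = u ∨ w = v)
    -- at least two of the paths have length at least 2 (so the theta graph is simple)
    (hlen : (2 ≤ P1.length ∧ 2 ≤ P2.length) ∨ (2 ≤ P2.length ∧ 2 ≤ P3.length) ∨
      (2 ≤ P3.length ∧ 2 ≤ P1.length))
    -- A meets at least two of the three subdivided edges
    (hA : ((∃ a ∈ A, a ∈ P1.support) ∧ (∃ a ∈ A, a ∈ P2.support)) ∨
      ((∃ a ∈ A, a ∈ P2.support) ∧ (∃ a ∈ A, a ∈ P3.support)) ∨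
      ((∃ a ∈ A, a ∈ P3.support) ∧ (∃ a ∈ A, a ∈ P1.support))) :
    ∃ (w : V) (c : G.Walk w w), c.IsCycle ∧ Even c.length ∧ (∃ a ∈ A, a ∈ c.support) ∧
      ∀ e ∈ c.edges, e ∈ P1.edges ∨ e ∈ P2.edges ∨ e ∈ P3.edges := by
  rcases even_add_pair_of_two_of_three P1.length P2.length P3.length hA with
    ⟨heven, hmeets⟩ | ⟨heven, hmeets⟩ | ⟨heven, hmeets⟩
  · obtain ⟨w, c, hc, hc_even, hcA, hc_edges⟩ :=
      SimpleGraph.Walk.exists_even_isCycle_of_internallyDisjoint A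
        hP1 hP2 h12 (by omega) heven hmeets
    exact ⟨w, c, hc, hc_even, hcA, fun e he ↦ (hc_edges e he).imp_right Or.inl⟩
  · obtain ⟨w, c, hc, hc_even, hcA, hc_edges⟩ :=
      SimpleGraph.Walk.exists_even_isCycle_of_internallyDisjoint A
        hP2 hP3 h23 (by omega) heven hmeets
    exact ⟨w, c, hc, hc_even, hcA, fun e he ↦ Or.inr (hc_edges e he)⟩
  · obtain ⟨w, c, hc, hc_even, hcA, hc_edges⟩ :=
      SimpleGraph.Walk.exists_even_isCycle_of_internallyDisjoint A
        hP3 hP1 h31 (by omega) heven hmeets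
    exact ⟨w, c, hc, hc_even, hcA, fun e he ↦ (hc_edges e he).elim (Or.inr ∘ Or.inr) Or.inl⟩

/-- Every theta graph two of whose subdivided edges meet `A` contains an even `A`-cycle. -/
theorem theta_contains_even_A_cycle {V : Type*} (G : SimpleGraph V) (A : Set V)
    (u v : V) (huv : u ≠ v)
    (P1 P2 P3 : G.Walk u v)
    (hP1 : P1.IsPath) (hP2 : P2.IsPath) (hP3 : P3.IsPath)
    -- the three paths are internally disjoint
    (h12 : ∀ w, w ∈ P1.support → w ∈ P2.support → w = u ∨ w = v)
    (h23 : ∀ w, w ∈ P2.support → w ∈ P3.support → w = u ∨ w = v)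
    (h31 : ∀ w, w ∈ P3.support → w ∈ P1.support → w = u ∨ w = v)
    -- at least two of the paths have length at least 2 (so the theta graph is simple)
    (hlen : (2 ≤ P1.length ∧ 2 ≤ P2.length) ∨ (2 ≤ P2.length ∧ 2 ≤ P3.length) ∨
      (2 ≤ P3.length ∧ 2 ≤ P1.length))
    -- A meets at least two of the three subdivided edges
    (hA : ((∃ a ∈ A, a ∈ P1.support) ∧ (∃ a ∈ A, a ∈ P2.support)) ∨
      ((∃ a ∈ A, a ∈ P2.support) ∧ (∃ a ∈ A, a ∈ P3.support)) ∨
      ((∃ a ∈ A, a ∈ P3.support) ∧ (∃ a ∈ A, a ∈ P1.support))) :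
    ∃ (w : V) (c : G.Walk w w), c.IsCycle ∧ Even c.length ∧ (∃ a ∈ A, a ∈ c.support) ∧
      ∀ e ∈ c.edges, e ∈ P1.edges ∨ e ∈ P2.edges ∨ e ∈ P3.edges :=
  theta_contains_even_A_cycle_general G A u v P1 P2 P3 hP1 hP2 hP3 h12 h23 h31 hlen hA
end

section
/- Let a, b, c be three distinct vertices in a graph G. Then G contains a path that starts at a, passes through b, and ends at c if and only if no single vertex other than b separates b from {a, c} (i.e., for every vertex v ≠ b, there is a path from b to a or from b to c in G − v). -/
/-!
Add a virtual vertex `t` adjacent to `a` and `c`; an `a`–`b`–`c` path is a cycle through `b` and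
`t`, and the hypothesis says that no vertex separates `b` from `t`. Following Whitney's proof that
two such vertices lie on a common cycle, we induct along a walk from the target set `T = {a, c}`
back to `b`, keeping a fan: two paths from `b` that meet only in `b` and meet `T` only in their
last vertices. If `w` is a neighbour of `τ ∈ T`, a fan from `b` into `insert w T` is
turned into one into `T` by extending the arm ending at `w` to `τ`. If the other arm also ends at
`τ`, the two arms form a cycle through `b` and `τ`, and a path from `b` to `T` avoiding `τ` leaves
this cycle for the last time at some vertex `x`; rerouting the arm containing `x` along it yields
the fan.
-/

namespace SimpleGraph

variable {V : Type*} {G : SimpleGraph V}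

def Separates (G : SimpleGraph V) (v b : V) (T : Set V) : Prop :=
  ∀ τ ∈ T, ∀ p : G.Walk b τ, v ∈ p.support

def Walk.IsArm {b τ : V} (p : G.Walk b τ) (T : Set V) : Prop :=
  τ ∈ T ∧ p.IsPath ∧ ∀ y ∈ p.support, y ∈ T → y = τ

def HasTwoFan (G : SimpleGraph V) (b : V) (T : Set V) : Prop :=
  ∃ (τ₁ τ₂ : V) (p₁ : G.Walk b τ₁) (p₂ : G.Walk b τ₂), p₁.IsArm T ∧ p₂.IsArm T ∧
    ∀ y ∈ p₁.support, y ∈ p₂.support → y = b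

namespace Walk

theorem exists_eq_append_first_mem {u v : V} (p : G.Walk u v) {S : Set V} (hv : v ∈ S) :
    ∃ x ∈ S, ∃ (q : G.Walk u x) (r : G.Walk x v), p = q.append r ∧
      ∀ y ∈ q.support, y ∈ S → y = x := by
  induction p with
  | nil => exact ⟨_, hv, nil, nil, rfl, by simp⟩
  | @cons u _ _ h p ih =>
    by_cases hu : u ∈ S
    · exact ⟨u, hu, nil, cons h p, rfl, by simp⟩
    · obtain ⟨x, hx, q, r, rfl, hq⟩ := ih hv
      refine ⟨x, hx, cons h q, r, rfl, ?_⟩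
      rintro y hy hyS
      rcases List.mem_cons.1 hy with rfl | hy
      · exact absurd hyS hu
      · exact hq y hy hyS

theorem IsPath.append_of_forall_mem {u v w : V} {p : G.Walk u v} {q : G.Walk v w}
    (hp : p.IsPath) (hq : q.IsPath) (h : ∀ y ∈ p.support, y ∈ q.support → y = v) :
    (p.append q).IsPath := by
  rw [isPath_def, support_append, List.nodup_append]
  refine ⟨hp.support_nodup, hq.support_nodup.sublist (List.tail_sublist _), ?_⟩
  intro y hyp z hzq hyz
  subst hyz
  have hqv := q.cons_tail_support ▸ hq.support_nodup
  exact (List.nodup_cons.1 hqv).1 (h y hyp (List.mem_of_mem_tail hzq) ▸ hzq)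

theorem IsPath.notMem_takeUntil_or_notMem_dropUntil [DecidableEq V] {u v b x : V}
    {p : G.Walk u v} (hp : p.IsPath) (hb : b ∈ p.support) (hx : x ≠ b) :
    x ∉ (p.takeUntil b hb).support ∨ x ∉ (p.dropUntil b hb).support := by
  by_contra! h
  rw [← p.take_spec hb] at hp
  exact hp.ne_of_mem_support_of_append hx h.1 h.2 rfl

theorem IsArm.of_subset {b τ : V} {p : G.Walk b τ} {T T' : Set V} (h : p.IsArm T')
    (hT : T ⊆ T') (hτ : τ ∈ T) : p.IsArm T :=
  ⟨hτ, h.2.1, fun y hy hyT => h.2.2 y hy (hT hyT)⟩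

end Walk

open Walk

theorem Separates.anti {v b : V} {T T' : Set V} (h : G.Separates v b T') (hT : T ⊆ T') :
    G.Separates v b T :=
  fun τ hτ => h τ (hT hτ)

theorem exists_isArm_of_not_separates {z b : V} {T : Set V} (h : ¬ G.Separates z b T) :
    ∃ (τ : V) (p : G.Walk b τ), p.IsArm T ∧ z ∉ p.support := by
  classical
  simp only [Separates, not_forall] at h
  obtain ⟨τ, hτ, p, hz⟩ := h
  obtain ⟨x, hx, q, r, hqr, hq⟩ := p.bypass.exists_eq_append_first_mem hτ
  have hqp : q.support ⊆ p.support := fun y hy =>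
    p.support_bypass_subset_support (hqr ▸ support_subset_support_append_left q r hy)
  exact ⟨x, q, ⟨hx, (hqr ▸ p.bypass_isPath).of_append_left, hq⟩, fun hzq => hz (hqp hzq)⟩

theorem HasTwoFan.exists_isPath {b : V} {T : Set V} (h : G.HasTwoFan b T) (hb : b ∉ T) :
    ∃ τ₁ ∈ T, ∃ τ₂ ∈ T, τ₁ ≠ τ₂ ∧ ∃ p : G.Walk τ₁ τ₂, p.IsPath ∧ b ∈ p.support := by
  obtain ⟨τ₁, τ₂, p₁, p₂, h₁, h₂, h⟩ := h
  refine ⟨τ₁, h₁.1, τ₂, h₂.1, ?_, p₁.reverse.append p₂, ?_, by simp⟩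
  · rintro rfl
    exact hb (h τ₁ p₁.end_mem_support p₂.end_mem_support ▸ h₁.1)
  · exact h₁.2.1.reverse.append_of_forall_mem h₂.2.1 fun y hy₁ hy₂ => h y (by simpa using hy₁) hy₂

section Fan

variable {b τ : V} {T : Set V}

theorem hasTwoFan_of_reroute {x τ' : V} {C₁ C₂ : G.Walk b τ} {q : G.Walk x τ'}
    (hC₁ : C₁.IsArm T) (hC₂ : C₂.IsArm T) (hC : ∀ y ∈ C₁.support, y ∈ C₂.support → y = b ∨ y = τ)
    (hx : x ∈ C₁.support) (hxτ : x ≠ τ) (hq : q.IsArm T)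
    (hqC : ∀ y ∈ q.support, y ∈ C₁.support ∨ y ∈ C₂.support → y = x) :
    G.HasTwoFan b T := by
  classical
  have hτ := endpoint_notMem_support_takeUntil hC₁.2.1 hx hxτ.symm
  have hsub := C₁.support_takeUntil_subset_support hx
  refine ⟨τ', τ, (C₁.takeUntil x hx).append q, C₂, ⟨hq.1, ?_, ?_⟩, hC₂, ?_⟩
  · exact (hC₁.2.1.takeUntil hx).append_of_forall_mem hq.2.1
      fun y hy hyq => hqC y hyq (Or.inl (hsub hy))
  · intro y hy hyT
    rcases (mem_support_append_iff _ _).1 hy with hy | hy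
    · exact absurd (hC₁.2.2 y (hsub hy) hyT ▸ hy) hτ
    · exact hq.2.2 y hy hyT
  · intro y hy hy₂
    rcases (mem_support_append_iff _ _).1 hy with hy | hy
    · exact (hC y (hsub hy) hy₂).resolve_right fun h => hτ (h ▸ hy)
    · obtain rfl := hqC y hy (Or.inr hy₂)
      exact (hC y hx hy₂).resolve_right hxτ

theorem hasTwoFan_of_cycle {τ' : V} {C₁ C₂ : G.Walk b τ} {R : G.Walk b τ'}
    (hC₁ : C₁.IsArm T) (hC₂ : C₂.IsArm T) (hC : ∀ y ∈ C₁.support, y ∈ C₂.support → y = b ∨ y = τ)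
    (hR : R.IsArm T) (hτR : τ ∉ R.support) :
    G.HasTwoFan b T := by
  obtain ⟨x, hxC, q, r, hRqr, hq⟩ :=
    R.reverse.exists_eq_append_first_mem (S := {y | y ∈ C₁.support ∨ y ∈ C₂.support})
      (Or.inl C₁.start_mem_support)
  have hqR : q.support ⊆ R.support := fun y hy => by
    simpa using (hRqr ▸ support_subset_support_append_left q r hy : y ∈ R.reverse.support)
  have hq' : q.reverse.IsArm T :=
    ⟨hR.1, (hRqr ▸ hR.2.1.reverse).of_append_left.reverse,
      fun y hy hyT => hR.2.2 y (hqR (by simpa using hy)) hyT⟩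
  have hxτ : x ≠ τ := fun h => hτR (h ▸ hqR q.end_mem_support)
  have hqC : ∀ y ∈ q.reverse.support, y ∈ C₁.support ∨ y ∈ C₂.support → y = x :=
    fun y hy hyC => hq y (by simpa using hy) hyC
  rcases hxC with hx | hx
  · exact hasTwoFan_of_reroute hC₁ hC₂ hC hx hxτ hq' hqC
  · exact hasTwoFan_of_reroute hC₂ hC₁ (fun y hy₂ hy₁ => hC y hy₁ hy₂) hx hxτ hq'
      fun y hy hyC => hqC y hy hyC.symm

theorem hasTwoFan_of_arm_to_neighbor {w τ₂ : V} {P₁ : G.Walk b w} {P₂ : G.Walk b τ₂}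
    (h₁ : P₁.IsArm (insert w T)) (h₂ : P₂.IsArm (insert w T))
    (hP : ∀ y ∈ P₁.support, y ∈ P₂.support → y = b) (hτ₂w : τ₂ ≠ w) (hb : b ∉ T) (hw : w ∉ T)
    (hwτ : G.Adj w τ) (hτ : τ ∈ T) (hsep : ∀ v ≠ b, ¬ G.Separates v b T) :
    G.HasTwoFan b T := by
  have hP₁T : ∀ y ∈ P₁.support, y ∉ T := fun y hy hyT => hw (h₁.2.2 y hy (Or.inr hyT) ▸ hyT)
  have hC₁ : (P₁.concat hwτ).IsArm T := by
    refine ⟨hτ, h₁.2.1.concat (fun h => hP₁T τ h hτ) hwτ, fun y hy hyT => ?_⟩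
    rw [support_concat, List.mem_append, List.mem_singleton] at hy
    exact hy.resolve_left fun hy => hP₁T y hy hyT
  have hC₂ : P₂.IsArm T := h₂.of_subset (Set.subset_insert w T) (h₂.1.resolve_left hτ₂w)
  have hC : ∀ y ∈ (P₁.concat hwτ).support, y ∈ P₂.support → y = b ∨ y = τ := by
    intro y hy hy₂
    rw [support_concat, List.mem_append, List.mem_singleton] at hy
    exact hy.imp (hP y · hy₂) id
  by_cases hτ₂τ : τ₂ = τ
  · subst hτ₂τ
    obtain ⟨τ', R, hR, hτR⟩ := exists_isArm_of_not_separates (hsep _ fun h => hb (h ▸ hτ))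
    exact hasTwoFan_of_cycle hC₁ hC₂ hC hR hτR
  · refine ⟨τ, τ₂, P₁.concat hwτ, P₂, hC₁, hC₂, fun y hy hy₂ => (hC y hy hy₂).resolve_right ?_⟩
    rintro rfl
    exact hτ₂τ (h₂.2.2 y hy₂ (Or.inr hτ)).symm

theorem HasTwoFan.of_insert {w : V} (h : G.HasTwoFan b (insert w T)) (hb : b ∉ insert w T)
    (hw : w ∉ T) (hwτ : G.Adj w τ) (hτ : τ ∈ T) (hsep : ∀ v ≠ b, ¬ G.Separates v b T) :
    G.HasTwoFan b T := by
  obtain ⟨τ₁, τ₂, p₁, p₂, h₁, h₂, h⟩ := h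
  have hbT : b ∉ T := fun hbT => hb (Or.inr hbT)
  by_cases hτ₁ : τ₁ = w
  · subst hτ₁
    refine hasTwoFan_of_arm_to_neighbor h₁ h₂ h ?_ hbT hw hwτ hτ hsep
    rintro rfl
    exact hb (h τ₂ p₁.end_mem_support p₂.end_mem_support ▸ h₁.1)
  by_cases hτ₂ : τ₂ = w
  · subst hτ₂
    exact hasTwoFan_of_arm_to_neighbor h₂ h₁ (fun y hy₂ hy₁ => h y hy₁ hy₂) hτ₁ hbT hw hwτ hτ hsep
  · exact ⟨τ₁, τ₂, p₁, p₂, h₁.of_subset (Set.subset_insert w T) (h₁.1.resolve_left hτ₁),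
      h₂.of_subset (Set.subset_insert w T) (h₂.1.resolve_left hτ₂), h⟩

theorem hasTwoFan_of_adj {u : V} (hbu : G.Adj b u) (hu : u ∈ T) (hb : b ∉ T)
    (hsep : ∀ v ≠ b, ¬ G.Separates v b T) : G.HasTwoFan b T := by
  obtain ⟨τ, R, hR, huR⟩ := exists_isArm_of_not_separates (hsep u fun h => hb (h ▸ hu))
  have hsupp : hbu.toWalk.support = [b, u] := rfl
  refine ⟨u, τ, hbu.toWalk, R, ⟨hu, hbu.isPath_toWalk, ?_⟩, hR, ?_⟩
  · intro y hy hyT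
    simp only [hsupp, List.mem_cons, List.not_mem_nil, or_false] at hy
    exact hy.resolve_left fun hy => hb (hy ▸ hyT)
  · intro y hy hyR
    simp only [hsupp, List.mem_cons, List.not_mem_nil, or_false] at hy
    exact hy.resolve_right fun hy => huR (hy ▸ hyR)

theorem hasTwoFan_of_walk {u : V} (p : G.Walk u b) (hu : u ∈ T) (hb : b ∉ T)
    (hsep : ∀ v ≠ b, ¬ G.Separates v b T) : G.HasTwoFan b T := by
  induction p generalizing T with
  | nil => exact absurd hu hb
  | @cons u w b h p ih =>
    by_cases hwb : w = b
    · exact hasTwoFan_of_adj (hwb ▸ h.symm) hu hb hsep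
    by_cases hwT : w ∈ T
    · exact ih hwT hb hsep
    · have hb' : b ∉ insert w T := by simp [Ne.symm hwb, hb]
      have hsep' : ∀ v ≠ b, ¬ G.Separates v b (insert w T) :=
        fun v hv hv' => hsep v hv (hv'.anti (Set.subset_insert w T))
      exact (ih (Set.mem_insert w T) hb' hsep').of_insert hb' hwT h.symm hu hsep

theorem hasTwoFan_of_forall_not_separates (hb : b ∉ T) (hT : T.Nonempty)
    (hsep : ∀ v ≠ b, ¬ G.Separates v b T) : G.HasTwoFan b T := by
  obtain ⟨τ, hτ⟩ := hT
  obtain ⟨τ', p, hp, -⟩ := exists_isArm_of_not_separates (hsep τ fun h => hb (h ▸ hτ))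
  exact hasTwoFan_of_walk p.reverse hp.1 hb hsep

end Fan

end SimpleGraph

theorem abc_path_iff_general {V : Type*} (G : SimpleGraph V) (a b c : V)
    (hab : a ≠ b) (hbc : b ≠ c) :
    (∃ p : G.Walk a c, p.IsPath ∧ b ∈ p.support) ↔
      (∀ v : V, v ≠ b →
        (∃ p : G.Walk b a, p.IsPath ∧ v ∉ p.support) ∨
        (∃ p : G.Walk b c, p.IsPath ∧ v ∉ p.support)) := by
  classical
  constructor
  · rintro ⟨p, hp, hbp⟩ v hv
    rcases hp.notMem_takeUntil_or_notMem_dropUntil hbp hv with h | h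
    · exact Or.inl ⟨_, (hp.takeUntil hbp).reverse, by simpa using h⟩
    · exact Or.inr ⟨_, hp.dropUntil hbp, h⟩
  · intro h
    have hsep : ∀ v ≠ b, ¬ G.Separates v b {a, c} := by
      intro v hv hsep
      rcases h v hv with ⟨p, -, hp⟩ | ⟨p, -, hp⟩
      exacts [hp (hsep a (by simp) p), hp (hsep c (by simp) p)]
    have hb : b ∉ ({a, c} : Set V) := by simp [hab.symm, hbc]
    obtain ⟨τ₁, hτ₁, τ₂, hτ₂, hne, p, hp, hbp⟩ :=
      (SimpleGraph.hasTwoFan_of_forall_not_separates hb ⟨a, by simp⟩ hsep).exists_isPath hb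
    simp only [Set.mem_insert_iff, Set.mem_singleton_iff] at hτ₁ hτ₂
    rcases hτ₁ with rfl | rfl <;> rcases hτ₂ with rfl | rfl
    · exact absurd rfl hne
    · exact ⟨p, hp, hbp⟩
    · exact ⟨p.reverse, hp.reverse, by simpa using hbp⟩
    · exact absurd rfl hne

/-- A graph contains an `a`–`b`–`c` path iff no single vertex other than `b`
separates `b` from `{a, c}`. -/
theorem abc_path_iff {V : Type*} (G : SimpleGraph V) (a b c : V)
    (hab : a ≠ b) (hbc : b ≠ c) (hac : a ≠ c) :
    (∃ p : G.Walk a c, p.IsPath ∧ b ∈ p.support) ↔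
      (∀ v : V, v ≠ b →
        (∃ p : G.Walk b a, p.IsPath ∧ v ∉ p.support) ∨
        (∃ p : G.Walk b c, p.IsPath ∧ v ∉ p.support)) :=
  abc_path_iff_general G a b c hab hbc
end

section
/- Every tree with s ≥ 2 leaves and diameter d has at most sd/2 + 1 vertices. -/
/-!
Take `c₁ = c₂` the centre of the tree if its diameter is even, and `c₁ ~ c₂` its two adjacent
centres if it is odd; in both cases `dist c₁ x + dist c₂ x ≤ diam` for every vertex `x`.
Every vertex other than a given `c` lies on the path from `c` to some leaf, so
`|V| ≤ 1 + ∑ dist c ℓ` over the leaves `ℓ`. Adding this for `c₁` and `c₂` gives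
`2 |V| ≤ 2 + ∑ (dist c₁ ℓ + dist c₂ ℓ) ≤ 2 + s d`.
-/

open Finset

namespace SimpleGraph

variable {V : Type*} {G : SimpleGraph V}

theorem Walk.dist_getVert_of_length_eq_dist {u w : V} {p : G.Walk u w}
    (hp : p.length = G.dist u w) {i : ℕ} (hi : i ≤ p.length) :
    G.dist u (p.getVert i) = i ∧ G.dist (p.getVert i) w = p.length - i := by
  have hstart := dist_le (p.take i)
  have hend := dist_le (p.drop i)
  rw [Walk.take_length] at hstart
  rw [Walk.drop_length] at hend
  have := (p.take i).reachable.dist_triangle_left w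
  omega

theorem Walk.dist_add_dist_eq_of_length_eq_dist {u w c : V} {p : G.Walk u w}
    (hp : p.length = G.dist u w) (hc : c ∈ p.support) :
    G.dist u c + G.dist c w = G.dist u w := by
  classical
  have hsplit := congrArg length (p.take_spec hc)
  rw [length_append] at hsplit
  have := dist_le (p.takeUntil c hc)
  have := dist_le (p.dropUntil c hc)
  have := (p.takeUntil c hc).reachable.dist_triangle_left w
  omega

theorem IsAcyclic.length_eq_dist_of_isPath (hG : G.IsAcyclic) {u v : V} {p : G.Walk u v}
    (hp : p.IsPath) : p.length = G.dist u v := by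
  obtain ⟨q, hq, hql⟩ := p.reachable.exists_path_of_dist
  rw [← hql, Subtype.mk.inj ((hG.subsingleton_path u v).elim ⟨p, hp⟩ ⟨q, hq⟩)]

theorem IsAcyclic.support_subset_support_of_isPath (hG : G.IsAcyclic) {u v : V}
    {p : G.Walk u v} (hp : p.IsPath) (q : G.Walk u v) : p.support ⊆ q.support := by
  classical
  rw [Subtype.mk.inj ((hG.subsingleton_path u v).elim ⟨p, hp⟩ ⟨q.bypass, q.bypass_isPath⟩)]
  exact q.support_bypass_subset_support

theorem IsAcyclic.exists_append_isPath_degree_eq_one [Fintype V] [DecidableRel G.Adj]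
    (hG : G.IsAcyclic) {v w : V} {p : G.Walk v w} (hp : p.IsPath) (hne : v ≠ w) :
    ∃ (ℓ : V) (r : G.Walk ℓ v), (r.append p).IsPath ∧ G.degree ℓ = 1 := by
  by_cases hdeg : G.degree v = 1
  · exact ⟨v, .nil, by simpa using hp, hdeg⟩
  have hnil : ¬p.Nil := Walk.not_nil_of_ne hne
  have htwo : 1 < (G.neighborFinset v).card := by
    have : 0 < G.degree v := G.degree_pos_iff_exists_adj v |>.mpr ⟨_, p.adj_snd hnil⟩
    rw [card_neighborFinset_eq_degree]
    omega
  obtain ⟨z, hz, hzsnd⟩ := exists_mem_ne htwo p.snd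
  rw [mem_neighborFinset] at hz
  have hzp : z ∉ p.support := fun h => hzsnd (hG.eq_snd_of_adj_start hp hz h)
  have hp' : (Walk.cons hz.symm p).IsPath := (Walk.cons_isPath_iff _ _).mpr ⟨hp, hzp⟩
  have : Fintype.card V - (Walk.cons hz.symm p).length < Fintype.card V - p.length := by
    have := hp'.length_lt
    simp only [Walk.length_cons] at this ⊢
    omega
  obtain ⟨ℓ, r, hr, hℓ⟩ :=
    hG.exists_append_isPath_degree_eq_one hp' (by rintro rfl; exact hzp p.end_mem_support)
  exact ⟨ℓ, r.concat hz.symm, by rwa [Walk.concat_append], hℓ⟩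
termination_by Fintype.card V - p.length

theorem IsTree.dist_le_max_of_mem_support (hT : G.IsTree) {u w c : V} {p : G.Walk u w}
    (hp : p.IsPath) (hc : c ∈ p.support) {x : V} (hux : G.dist u x ≤ G.dist u w)
    (hxw : G.dist x w ≤ G.dist u w) : G.dist c x ≤ max (G.dist u c) (G.dist c w) := by
  have hcuw :=
    Walk.dist_add_dist_eq_of_length_eq_dist (hT.isAcyclic.length_eq_dist_of_isPath hp) hc
  obtain ⟨q₁, -, hq₁⟩ := (hT.connected u x).exists_path_of_dist
  obtain ⟨q₂, -, hq₂⟩ := (hT.connected x w).exists_path_of_dist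
  have hc' := hT.isAcyclic.support_subset_support_of_isPath hp (q₁.append q₂) hc
  rcases (Walk.mem_support_append_iff q₁ q₂).mp hc' with h | h
  · have := Walk.dist_add_dist_eq_of_length_eq_dist hq₁ h
    omega
  · have := Walk.dist_add_dist_eq_of_length_eq_dist hq₂ h
    have : G.dist x c = G.dist c x := dist_comm
    omega

theorem IsTree.exists_forall_dist_add_dist_le_diam [Finite V] (hT : G.IsTree) :
    ∃ c₁ c₂, ∀ x, G.dist c₁ x + G.dist c₂ x ≤ G.diam := by
  have : Nonempty V := hT.connected.nonempty
  have hfin : G.ediam ≠ ⊤ := connected_iff_ediam_ne_top.mp hT.connected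
  obtain ⟨u, w, huw⟩ := G.exists_dist_eq_diam
  obtain ⟨p, hp, hpl⟩ := (hT.connected u w).exists_path_of_dist
  have hecc : ∀ i ≤ G.diam, ∀ x, G.dist (p.getVert i) x ≤ max i (G.diam - i) := by
    intro i hi x
    obtain ⟨hstart, hend⟩ := Walk.dist_getVert_of_length_eq_dist hpl (i := i) (by omega)
    have := hT.dist_le_max_of_mem_support hp (p.getVert_mem_support i)
      (huw ▸ dist_le_diam hfin) (huw ▸ dist_le_diam hfin) (x := x)
    omega
  obtain ⟨k, hk | hk⟩ := Nat.even_or_odd' G.diam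
  · exact ⟨p.getVert k, p.getVert k, fun x => by have := hecc k (by omega) x; omega⟩
  · refine ⟨p.getVert k, p.getVert (k + 1), fun x => ?_⟩
    have := hecc k (by omega) x
    have := hecc (k + 1) (by omega) x
    -- both distances are at most `k + 1`, but they differ by exactly one
    have := hT.dist_eq_dist_add_one_of_adj x (p.adj_getVert_succ (i := k) (by omega))
    rw [dist_comm (u := x), dist_comm (u := x)] at this
    omega

theorem IsTree.card_le_one_add_sum_dist_leaves [Fintype V] [DecidableRel G.Adj]
    (hT : G.IsTree) (c : V) :
    Fintype.card V ≤ 1 + ∑ ℓ ∈ univ.filter (fun ℓ => G.degree ℓ = 1), G.dist c ℓ := by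
  classical
  choose P hP using fun ℓ => (hT.connected c ℓ).exists_walk_length_eq_dist
  have hcover : univ.erase c ⊆ (univ.filter fun ℓ => G.degree ℓ = 1).biUnion
      fun ℓ => (P ℓ).support.tail.toFinset := by
    intro v hv
    have hvc : v ≠ c := ne_of_mem_erase hv
    obtain ⟨q, hq, -⟩ := (hT.connected v c).exists_path_of_dist
    obtain ⟨ℓ, r, hrq, hℓ⟩ := hT.isAcyclic.exists_append_isPath_degree_eq_one hq hvc
    have hvP : v ∈ (P ℓ).support :=
      hT.isAcyclic.support_subset_support_of_isPath hrq.reverse (P ℓ) (by simp)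
    rw [← Walk.cons_tail_support, List.mem_cons] at hvP
    simpa [hℓ] using ⟨ℓ, hℓ, hvP.resolve_left hvc⟩
  calc Fintype.card V = 1 + (univ.erase c).card := by
        rw [card_erase_of_mem (mem_univ c), card_univ]
        have := Fintype.card_pos_iff.mpr ⟨c⟩
        omega
    _ ≤ 1 + ∑ ℓ ∈ univ.filter (fun ℓ => G.degree ℓ = 1), (P ℓ).support.tail.toFinset.card := by
        grw [hcover, card_biUnion_le]
    _ ≤ 1 + ∑ ℓ ∈ univ.filter (fun ℓ => G.degree ℓ = 1), G.dist c ℓ := by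
        gcongr with ℓ
        grw [List.toFinset_card_le, List.length_tail, Walk.length_support, hP]
        omega

end SimpleGraph

theorem tree_card_le_of_leaves_diameter_general {V : Type*} [Fintype V]
    (G : SimpleGraph V) [DecidableRel G.Adj] (hT : G.IsTree) (s d : ℕ)
    (hs : s = (Finset.univ.filter fun v => G.degree v = 1).card)
    (hd : ∀ (u w : V) (p : G.Walk u w), p.IsPath → p.length ≤ d) :
    2 * Fintype.card V ≤ s * d + 2 := by
  have : Nonempty V := hT.connected.nonempty
  have hdiam : G.diam ≤ d := by
    obtain ⟨u, w, huw⟩ := G.exists_dist_eq_diam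
    obtain ⟨p, hp, hpl⟩ := (hT.connected u w).exists_path_of_dist
    exact huw ▸ hpl ▸ hd u w p hp
  obtain ⟨c₁, c₂, hc⟩ := hT.exists_forall_dist_add_dist_le_diam
  have hsum :
      ∑ ℓ ∈ univ.filter (fun ℓ => G.degree ℓ = 1), (G.dist c₁ ℓ + G.dist c₂ ℓ) ≤ s * d := by
    rw [hs, ← smul_eq_mul]
    exact sum_le_card_nsmul _ _ _ fun ℓ _ => (hc ℓ).trans hdiam
  have h₁ := hT.card_le_one_add_sum_dist_leaves c₁
  have h₂ := hT.card_le_one_add_sum_dist_leaves c₂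
  rw [sum_add_distrib] at hsum
  omega

/-- Every tree with `s ≥ 2` leaves and diameter `d` has at most `s*d/2 + 1` vertices. -/
theorem tree_card_le_of_leaves_diameter {V : Type*} [Fintype V] [DecidableEq V]
    (G : SimpleGraph V) [DecidableRel G.Adj] (hT : G.IsTree) (s d : ℕ)
    (hs : s = (Finset.univ.filter fun v => G.degree v = 1).card) (hs2 : 2 ≤ s)
    (hd : ∀ (u w : V) (p : G.Walk u w), p.IsPath → p.length ≤ d) :
    2 * Fintype.card V ≤ s * d + 2 :=
  tree_card_le_of_leaves_diameter_general G hT s d hs hd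
end

section
/- Every tree T with maximum degree Δ(T) ≥ 3 and with s leaves contains at least ⌊s/(2Δ(T))⌋ pairwise vertex-disjoint subtrees each of which contains at least three leaves of T. -/
/-!
Root the tree at a vertex `r` of maximum degree `Δ`. Among the vertices whose subtree contains
at least three leaves not yet used, pick one, `v`, as far from `r` as possible. Every child of `v`
then sees at most two unused leaves, and `v` is not itself a leaf, so the subtree of `v` contains
between `3` and `2Δ` unused leaves. Cutting it off (minus the pieces cut earlier) costs at most
`2Δ` leaves, so the step can be repeated `⌊s/(2Δ)⌋` times.
-/

open Finset Function

theorem Fin.pairwise_cons {α : Type*} {R : α → α → Prop} [Std.Symm R] {n : ℕ} {a : α}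
    {f : Fin n → α} (ha : ∀ i, R a (f i)) (hf : Pairwise (R on f)) :
    Pairwise (R on (Fin.cons a f : Fin (n + 1) → α)) := by
  intro i j hij
  cases i using Fin.cases <;> cases j using Fin.cases
  · exact absurd rfl hij
  · exact ha _
  · exact Std.Symm.symm _ _ (ha _)
  · exact hf (ne_of_apply_ne Fin.succ hij)

namespace SimpleGraph

variable {V : Type*} {G : SimpleGraph V} {r u v w x : V}

lemma Walk.dist_eq_add_of_mem_support {p : G.Walk u w} (hp : p.length = G.dist u w)
    (hx : x ∈ p.support) : G.dist u w = G.dist u x + G.dist x w := by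
  classical
  have htake := dist_le (p.takeUntil x hx)
  have hdrop := dist_le (p.dropUntil x hx)
  have hsplit := congrArg Walk.length (p.take_spec hx)
  rw [Walk.length_append] at hsplit
  have := (p.takeUntil x hx).reachable.dist_triangle_left w
  omega

variable [Fintype V]

/-- For a tree rooted at `r`, the vertex set of the subtree hanging from `v`; in general, the
vertices `w` such that some shortest path from `r` to `w` passes through `v`. -/
noncomputable def descendants (G : SimpleGraph V) (r v : V) : Finset V :=
  {w | G.dist r w = G.dist r v + G.dist v w}

lemma mem_descendants : w ∈ G.descendants r v ↔ G.dist r w = G.dist r v + G.dist v w := by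
  simp [descendants]

lemma self_mem_descendants : v ∈ G.descendants r v := by
  simp [mem_descendants]

lemma descendants_root : G.descendants r r = univ := by
  ext w
  simp [mem_descendants]

lemma Connected.descendants_subset_of_mem (hc : G.Connected) (hw : w ∈ G.descendants r v) :
    G.descendants r w ⊆ G.descendants r v := by
  intro x hx
  rw [mem_descendants] at *
  have := hc.dist_triangle (u := v) (v := w) (w := x)
  have := hc.dist_triangle (u := r) (v := v) (w := x)
  omega

lemma Connected.mem_descendants_of_mem_support (hc : G.Connected) (hw : w ∈ G.descendants r v)
    {p : G.Walk v w} (hp : p.length = G.dist v w) (hx : x ∈ p.support) :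
    x ∈ G.descendants r v ∧ w ∈ G.descendants r x := by
  rw [mem_descendants] at hw
  have hsplit := Walk.dist_eq_add_of_mem_support hp hx
  have := hc.dist_triangle (u := r) (v := v) (w := x)
  have := hc.dist_triangle (u := r) (v := x) (w := w)
  exact ⟨mem_descendants.mpr (by omega), mem_descendants.mpr (by omega)⟩

lemma Connected.exists_adj_mem_descendants (hc : G.Connected) (hx : x ∈ G.descendants r v)
    (hxv : x ≠ v) :
    ∃ w, G.Adj v w ∧ G.dist r w = G.dist r v + 1 ∧ x ∈ G.descendants r w := by
  obtain ⟨p, hp⟩ := hc.exists_walk_length_eq_dist v x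
  cases p with
  | nil => exact absurd rfl hxv
  | @cons _ w _ hvw q =>
    have hw : w ∈ (Walk.cons hvw q).support := by simp
    obtain ⟨hwv, hxw⟩ := hc.mem_descendants_of_mem_support hx hp hw
    rw [mem_descendants, dist_eq_one_iff_adj.mpr hvw] at hwv
    exact ⟨w, hvw, hwv, hxw⟩

lemma Connected.exists_adj_dist_add_one (hc : G.Connected) (hv : v ≠ r) :
    ∃ u, G.Adj v u ∧ G.dist r v = G.dist r u + 1 := by
  obtain ⟨u, hvu, -, hru⟩ :=
    hc.exists_adj_mem_descendants (descendants_root (G := G) ▸ mem_univ r) hv.symm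
  rw [mem_descendants, dist_eq_one_iff_adj.mpr hvu, dist_comm, dist_comm (u := u)] at hru
  exact ⟨u, hvu, by omega⟩

lemma Connected.descendants_eq_singleton_of_degree_eq_one [DecidableRel G.Adj]
    (hc : G.Connected) (hv : G.degree v = 1) (hvr : v ≠ r) : G.descendants r v = {v} := by
  refine eq_singleton_iff_unique_mem.mpr ⟨self_mem_descendants, fun x hx => ?_⟩
  by_contra hxv
  obtain ⟨w, hvw, hw, -⟩ := hc.exists_adj_mem_descendants hx hxv
  obtain ⟨u, hvu, hu⟩ := hc.exists_adj_dist_add_one hvr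
  obtain ⟨y, -, hy⟩ := degree_eq_one_iff_existsUnique_adj.mp hv
  obtain rfl : w = u := (hy w hvw).trans (hy u hvu).symm
  omega

lemma Connected.card_descendants_inter_le_mul_degree [DecidableEq V] [DecidableRel G.Adj]
    (hc : G.Connected) {M : Finset V} {c : ℕ} (hvM : v ∉ M)
    (hchild : ∀ w, G.Adj v w → G.dist r w = G.dist r v + 1 → #(G.descendants r w ∩ M) ≤ c) :
    #(G.descendants r v ∩ M) ≤ c * G.degree v := by
  set children := {w ∈ G.neighborFinset v | G.dist r w = G.dist r v + 1}
  have hcover : G.descendants r v ∩ M ⊆ children.biUnion (G.descendants r · ∩ M) := by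
    intro x hx
    rw [mem_inter] at hx
    obtain ⟨w, hvw, hw, hxw⟩ :=
      hc.exists_adj_mem_descendants hx.1 (ne_of_mem_of_not_mem hx.2 hvM)
    exact mem_biUnion.mpr ⟨w, by simp [children, hvw, hw], mem_inter.mpr ⟨hxw, hx.2⟩⟩
  calc #(G.descendants r v ∩ M)
      ≤ #(children.biUnion (G.descendants r · ∩ M)) := card_le_card hcover
    _ ≤ #children * c := card_biUnion_le_card_mul _ _ _ fun w hw => by
        simp only [children, mem_filter, mem_neighborFinset] at hw
        exact hchild w hw.1 hw.2
    _ ≤ G.degree v * c := Nat.mul_le_mul_right _ (card_filter_le _ _)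
    _ = c * G.degree v := Nat.mul_comm _ _

lemma Connected.exists_card_descendants_inter_mem_Icc [DecidableEq V] [DecidableRel G.Adj]
    (hc : G.Connected) (hr : G.degree r ≠ 1) {M : Finset V} (hM : ∀ l ∈ M, G.degree l = 1)
    (hM3 : 3 ≤ #M) : ∃ v, #(G.descendants r v ∩ M) ∈ Set.Icc 3 (2 * G.maxDegree) := by
  have hroot : r ∈ ({u | 3 ≤ #(G.descendants r u ∩ M)} : Finset V) := by
    simpa [descendants_root] using hM3
  obtain ⟨v, hv, hdeepest⟩ := exists_max_image _ (G.dist r) ⟨r, hroot⟩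
  rw [mem_filter] at hv
  have hvM : v ∉ M := fun hvM => by
    have hvr : v ≠ r := by rintro rfl; exact hr (hM v hvM)
    have h3 := hv.2
    rw [hc.descendants_eq_singleton_of_degree_eq_one (hM v hvM) hvr] at h3
    have := card_le_card (inter_subset_left (s₁ := {v}) (s₂ := M))
    rw [card_singleton] at this
    omega
  refine ⟨v, hv.2, ?_⟩
  calc #(G.descendants r v ∩ M) ≤ 2 * G.degree v :=
        hc.card_descendants_inter_le_mul_degree hvM fun w _ hw => by
          by_contra! h3
          have := hdeepest w (by simp [Nat.succ_le_of_lt h3])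
          omega
    _ ≤ 2 * G.maxDegree := Nat.mul_le_mul_left _ (G.degree_le_maxDegree v)

lemma Connected.connected_induce_descendants_sdiff [DecidableEq V] (hc : G.Connected)
    {U : Finset V} (hU : ∀ w ∈ U, G.descendants r w ⊆ U) (hv : v ∉ U) :
    (G.induce (G.descendants r v \ U : Finset V)).Connected := by
  refine induce_connected_of_patches v (by simp [self_mem_descendants, hv]) fun {x} hx => ?_
  rw [mem_coe, mem_sdiff] at hx
  obtain ⟨p, hp⟩ := hc.exists_walk_length_eq_dist v x
  refine ⟨{y | y ∈ p.support}, fun y hy => ?_, p.start_mem_support, p.end_mem_support,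
    p.connected_induce_support.preconnected _ _⟩
  obtain ⟨hyv, hxy⟩ := hc.mem_descendants_of_mem_support hx.1 hp hy
  exact mem_coe.mpr (mem_sdiff.mpr ⟨hyv, fun hyU => hx.2 (hU y hyU hxy)⟩)

theorem Connected.exists_pairwise_disjoint_connected_three_leaves [DecidableEq V]
    [DecidableRel G.Adj] (hc : G.Connected) (hr : 2 ≤ G.degree r) (k : ℕ) :
    ∀ U : Finset V, (∀ w ∈ U, G.descendants r w ⊆ U) →
      2 * G.maxDegree * k ≤ #(({v | G.degree v = 1} : Finset V) \ U) →
      ∃ S : Fin k → Finset V, Pairwise (Disjoint on S) ∧ (∀ i, Disjoint (S i) U) ∧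
        (∀ i, (G.induce (S i : Set V)).Connected) ∧ ∀ i, 3 ≤ #{v ∈ S i | G.degree v = 1} := by
  induction k with
  | zero => exact fun _ _ _ => ⟨finZeroElim, finZeroElim, finZeroElim, finZeroElim, finZeroElim⟩
  | succ k ih =>
    intro U hU hcard
    set L : Finset V := {v | G.degree v = 1}
    set M := L \ U
    have hΔ := G.degree_le_maxDegree r
    obtain ⟨v, hv3, hv2Δ⟩ := hc.exists_card_descendants_inter_mem_Icc (r := r) (by omega)
      (M := M) (fun l hl => by simpa [L] using (mem_sdiff.mp hl).1) (by nlinarith)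
    have hvU : v ∉ U := fun hvU => by
      have : G.descendants r v ∩ M = ∅ := by
        ext x
        simpa [M] using fun hx _ => hU v hvU hx
      simp [this] at hv3
    have hU' : ∀ w ∈ U ∪ G.descendants r v, G.descendants r w ⊆ U ∪ G.descendants r v := by
      simp only [mem_union]
      rintro w (hw | hw)
      · exact (hU w hw).trans subset_union_left
      · exact (hc.descendants_subset_of_mem hw).trans subset_union_right
    have hcard' : 2 * G.maxDegree * k ≤ #(L \ (U ∪ G.descendants r v)) := by
      rw [show L \ (U ∪ G.descendants r v) = M \ G.descendants r v from sdiff_sdiff_left.symm]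
      have := card_sdiff_add_card_inter M (G.descendants r v)
      rw [inter_comm] at hv2Δ
      rw [Nat.mul_succ] at hcard
      omega
    obtain ⟨S, hS, hSU, hSconn, hSleaves⟩ := ih _ hU' hcard'
    refine ⟨Fin.cons (G.descendants r v \ U) S, ?_, ?_, ?_, ?_⟩
    · refine Fin.pairwise_cons (fun i => ?_) hS
      exact (hSU i).symm.mono_left (sdiff_subset.trans subset_union_right)
    · refine Fin.cases sdiff_disjoint fun i => ?_
      exact (hSU i).mono_right subset_union_left
    · exact Fin.cases (hc.connected_induce_descendants_sdiff hU hvU) hSconn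
    · refine Fin.cases (hv3.trans (card_le_card fun x hx => ?_)) hSleaves
      simp only [M, L, mem_inter, mem_sdiff, mem_filter, mem_univ, true_and] at hx
      simp [hx]

end SimpleGraph

/-- Every tree `T` with maximum degree `Δ(T) ≥ 3` and `s` leaves contains
`⌊s/(2Δ(T))⌋` pairwise disjoint subtrees each containing three leaves of `T`. -/
theorem disjoint_three_leaf_subtrees {V : Type*} [Fintype V] [DecidableEq V]
    (G : SimpleGraph V) [DecidableRel G.Adj] (hT : G.IsTree)
    (hΔ : 3 ≤ G.maxDegree) (s : ℕ)
    (hs : s = (Finset.univ.filter fun v => G.degree v = 1).card) :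
    ∃ S : Fin (s / (2 * G.maxDegree)) → Finset V,
      (∀ i j, i ≠ j → Disjoint (S i) (S j)) ∧
      (∀ i, (G.induce ((S i : Set V))).Connected) ∧
      (∀ i, 3 ≤ ((S i).filter fun v => G.degree v = 1).card) := by
  have hc := hT.connected
  have := hc.nonempty
  obtain ⟨r, hr⟩ := G.exists_maximal_degree_vertex
  obtain ⟨S, hS, -, hconn, hleaves⟩ :=
    hc.exists_pairwise_disjoint_connected_three_leaves (r := r) (by omega) _ ∅ (by simp)
      (by simpa [← hs] using Nat.mul_div_le s (2 * G.maxDegree))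
  exact ⟨S, hS, hconn, hleaves⟩
end

section
/- Let G be a graph, A a set of vertices, and z a vertex such that G − z contains no even A-cycle. Let B be a block of G − z and let a ∈ A ∩ V(B). Then a has at most two neighbours in B. -/
/-- The graph obtained from `G` by deleting the vertex `z` (here: removing all edges at `z`,
so cycles and blocks avoiding `z` are exactly those of `G - z`). -/
def deleteVertex {V : Type*} (G : SimpleGraph V) (z : V) : SimpleGraph V :=
  SimpleGraph.fromRel fun x y => G.Adj x y ∧ x ≠ z ∧ y ≠ z

/-- `B` is a block of `H`: a maximal vertex set inducing a connected subgraph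
without a cutvertex. -/
def IsBlock {V : Type*} (H : SimpleGraph V) (B : Set V) : Prop :=
  (H.induce B).Connected ∧ (∀ v ∈ B, (H.induce (B \ {v})).Preconnected) ∧
    ∀ B' : Set V, B ⊆ B' → (H.induce B').Connected →
      (∀ v ∈ B', (H.induce (B' \ {v})).Preconnected) → B = B'

/-!
If `a` had three neighbours `b₁, b₂, b₃` in `B`, they would lie in `B - a`, which is connected
because `B` has no cutvertex. A tree in `B - a` joining them is a tripod: three paths from a
centre `t` to `b₁, b₂, b₃` meeting only at `t`. Two of the three legs have lengths of the same
parity, and closing those two legs through `a` gives an even cycle through `a`.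
-/

namespace SimpleGraph

variable {V : Type*} {G : SimpleGraph V}

lemma Preconnected.exists_isPath_of_induce {s : Set V} (hs : (G.induce s).Preconnected)
    {x y : V} (hx : x ∈ s) (hy : y ∈ s) :
    ∃ p : G.Walk x y, p.IsPath ∧ ∀ w ∈ p.support, w ∈ s := by
  classical
  obtain ⟨q, hq⟩ := (hs ⟨x, hx⟩ ⟨y, hy⟩).some.toPath
  let e := Embedding.induce (G := G) s
  have hsupp : ∀ w ∈ (q.map e.toHom).support, w ∈ s := by
    simp only [Walk.support_map, List.mem_map]
    rintro _ ⟨w, -, rfl⟩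
    exact w.2
  exact ⟨_, hq.map e.injective, hsupp⟩

namespace Walk

/-- `r` is the reverse of the initial segment of `p` ending at the first vertex of `p` in `S`. -/
lemma IsPath.exists_first_hit {S : Set V} :
    ∀ {u v : V} {p : G.Walk u v}, p.IsPath → v ∈ S →
      ∃ t ∈ S, ∃ r : G.Walk t u, r.IsPath ∧ (∀ x ∈ r.support, x ∈ p.support) ∧
        ∀ x ∈ r.support.tail, x ∉ S
  | _, _, .nil, _, hv => ⟨_, hv, .nil, .nil, by simp, by simp⟩
  | u, _, .cons h p, hp, hv => by
    by_cases hu : u ∈ S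
    · exact ⟨u, hu, .nil, .nil, by simp, by simp⟩
    obtain ⟨hp', hup⟩ := (cons_isPath_iff h p).1 hp
    obtain ⟨t, ht, r, hr, hrp, hrS⟩ := hp'.exists_first_hit hv
    refine ⟨t, ht, r.concat h.symm, hr.concat (fun hu' => hup (hrp u hu')) h.symm, ?_, ?_⟩
    · intro x hx
      rw [support_concat, List.mem_append] at hx
      aesop
    · intro x hx
      rw [support_concat, ← cons_tail_support, List.cons_append, List.tail_cons,
        List.mem_append] at hx
      aesop

lemma IsPath.start_notMem_tail_support {u v : V} {p : G.Walk u v} (hp : p.IsPath) :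
    u ∉ p.support.tail := by
  have hnd := hp.support_nodup
  rw [← cons_tail_support, List.nodup_cons] at hnd
  exact hnd.1

end Walk

open Walk

theorem exists_even_cycle_of_two_legs {t a b b' : V} {p : G.Walk t b} {q : G.Walk t b'}
    (hp : p.IsPath) (hq : q.IsPath) (hpq : p.support.tail.Disjoint q.support.tail)
    (hap : a ∉ p.support) (haq : a ∉ q.support) (hb : G.Adj b a) (hb' : G.Adj b' a)
    (hbb' : b ≠ b') (heven : Even (p.length + q.length)) :
    ∃ (v : V) (c : G.Walk v v), c.IsCycle ∧ Even c.length ∧ a ∈ c.support := by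
  have hP : (p.concat hb).IsPath := hp.concat hap hb
  have hQ : (q.concat hb').reverse.IsPath := (hq.concat haq hb').reverse
  have hdisj : (q.concat hb').reverse.support.tail.Disjoint (p.concat hb).support.tail := by
    intro x hxq hxp
    rw [reverse_concat, support_cons, List.tail_cons, support_reverse, List.mem_reverse] at hxq
    rw [concat_eq_append, mem_tail_support_append_iff, support_cons, support_nil, List.tail_cons,
      List.mem_singleton] at hxp
    rcases hxp with hxp | rfl
    · rw [← cons_tail_support, List.mem_cons] at hxq
      rcases hxq with rfl | hxq
      · exact hp.start_notMem_tail_support hxp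
      · exact hpq hxp hxq
    · exact haq hxq
  have hlong : 1 < (q.concat hb').reverse.length ∨ 1 < (p.concat hb).length := by
    by_contra! hshort
    simp only [length_reverse, length_concat] at hshort
    exact hbb' ((eq_of_length_eq_zero (p := p) (by omega)).symm.trans
      (eq_of_length_eq_zero (p := q) (by omega)))
  refine ⟨a, (q.concat hb').reverse.append (p.concat hb), hQ.isCycle_append hP hdisj hlong, ?_,
    start_mem_support _⟩
  simp only [length_append, length_reverse, length_concat]
  rw [show q.length + 1 + (p.length + 1) = p.length + q.length + 2 by omega]
  exact heven.add even_two

/-- The legs are the two halves, at `t`, of a `b₁`–`b₃` path `P` in `U`, and a path from `t`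
to `b₂` meeting `P` only at `t`. -/
theorem Preconnected.exists_tripod_of_induce {U : Set V} (hU : (G.induce U).Preconnected)
    {b₁ b₂ b₃ : V} (h₁ : b₁ ∈ U) (h₂ : b₂ ∈ U) (h₃ : b₃ ∈ U) :
    ∃ (t : V) (p₁ : G.Walk t b₁) (p₂ : G.Walk t b₂) (p₃ : G.Walk t b₃),
      p₁.IsPath ∧ p₂.IsPath ∧ p₃.IsPath ∧
      p₁.support.tail.Disjoint p₂.support.tail ∧ p₁.support.tail.Disjoint p₃.support.tail ∧
      p₂.support.tail.Disjoint p₃.support.tail ∧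
      (∀ x ∈ p₁.support, x ∈ U) ∧ (∀ x ∈ p₂.support, x ∈ U) ∧ (∀ x ∈ p₃.support, x ∈ U) := by
  classical
  obtain ⟨P, hP, hPU⟩ := hU.exists_isPath_of_induce h₁ h₃
  obtain ⟨R, hR, hRU⟩ := hU.exists_isPath_of_induce h₂ h₁
  obtain ⟨t, htP, r, hr, hrR, hrP⟩ :=
    hR.exists_first_hit (S := {x | x ∈ P.support}) P.start_mem_support
  have hsplit : (P.takeUntil t htP).support.Disjoint (P.dropUntil t htP).support.tail := by
    have hnd := hP.support_nodup
    rw [← P.take_spec htP, support_append] at hnd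
    exact List.disjoint_of_nodup_append hnd
  have htail₁ : (P.takeUntil t htP).reverse.support.tail ⊆ (P.takeUntil t htP).support :=
    fun x hx => by simpa using List.mem_of_mem_tail hx
  have hsub₁ : ∀ x ∈ (P.takeUntil t htP).support, x ∈ P.support :=
    fun x hx => P.support_takeUntil_subset_support htP hx
  have hsub₃ : ∀ x ∈ (P.dropUntil t htP).support, x ∈ P.support :=
    fun x hx => P.support_dropUntil_subset_support htP hx
  refine ⟨t, (P.takeUntil t htP).reverse, r, P.dropUntil t htP,
    (hP.takeUntil htP).reverse, hr, hP.dropUntil htP, ?_, ?_, ?_, ?_, ?_, ?_⟩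
  · exact fun x hx₁ hx₂ => hrP x hx₂ (hsub₁ x (htail₁ hx₁))
  · exact List.disjoint_of_subset_left htail₁ hsplit
  · exact fun x hx₂ hx₃ => hrP x hx₂ (hsub₃ x (List.mem_of_mem_tail hx₃))
  · intro x hx
    rw [support_reverse, List.mem_reverse] at hx
    exact hPU x (hsub₁ x hx)
  · exact fun x hx => hRU x (hrR x hx)
  · exact fun x hx => hPU x (hsub₃ x hx)

theorem exists_even_cycle_of_three_neighbours {U : Set V} (hU : (G.induce U).Preconnected)
    {a b₁ b₂ b₃ : V} (haU : a ∉ U) (h₁ : b₁ ∈ U) (h₂ : b₂ ∈ U) (h₃ : b₃ ∈ U)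
    (ha₁ : G.Adj a b₁) (ha₂ : G.Adj a b₂) (ha₃ : G.Adj a b₃)
    (h₁₂ : b₁ ≠ b₂) (h₁₃ : b₁ ≠ b₃) (h₂₃ : b₂ ≠ b₃) :
    ∃ (v : V) (c : G.Walk v v), c.IsCycle ∧ Even c.length ∧ a ∈ c.support := by
  obtain ⟨t, p₁, p₂, p₃, hp₁, hp₂, hp₃, d₁₂, d₁₃, d₂₃, hU₁, hU₂, hU₃⟩ :=
    hU.exists_tripod_of_induce h₁ h₂ h₃
  have hnot : ∀ {b} (p : G.Walk t b), (∀ x ∈ p.support, x ∈ U) → a ∉ p.support :=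
    fun p hp ha => haU (hp a ha)
  have parity : Even (p₁.length + p₂.length) ∨ Even (p₁.length + p₃.length) ∨
      Even (p₂.length + p₃.length) := by
    simp only [Nat.even_add]
    tauto
  rcases parity with h | h | h
  · exact exists_even_cycle_of_two_legs hp₁ hp₂ d₁₂ (hnot p₁ hU₁) (hnot p₂ hU₂)
      ha₁.symm ha₂.symm h₁₂ h
  · exact exists_even_cycle_of_two_legs hp₁ hp₃ d₁₃ (hnot p₁ hU₁) (hnot p₃ hU₃)
      ha₁.symm ha₃.symm h₁₃ h
  · exact exists_even_cycle_of_two_legs hp₂ hp₃ d₂₃ (hnot p₂ hU₂) (hnot p₃ hU₃)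
      ha₂.symm ha₃.symm h₂₃ h

end SimpleGraph

/-- If `G - z` contains no even `A`-cycle, then every vertex `a ∈ A` lying in a block `B`
of `G - z` has at most two neighbours in `B`. -/
theorem A_vertex_in_block_few_neighbours {V : Type*} (G : SimpleGraph V) (A : Set V) (z : V)
    (hno : ¬ ∃ (v : V) (c : (deleteVertex G z).Walk v v),
      c.IsCycle ∧ Even c.length ∧ ∃ a ∈ A, a ∈ c.support)
    (B : Set V) (hB : IsBlock (deleteVertex G z) B)
    (a : V) (haA : a ∈ A) (haB : a ∈ B) :
    {b ∈ B | (deleteVertex G z).Adj a b}.ncard ≤ 2 := by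
  by_contra! h3
  obtain ⟨b₁, hb₁, b₂, hb₂, b₃, hb₃, h₁₂, h₁₃, h₂₃⟩ :=
    (Set.two_lt_ncard (Set.finite_of_ncard_pos (by omega))).1 h3
  have hmem : ∀ {b}, b ∈ B ∧ (deleteVertex G z).Adj a b → b ∈ B \ {a} :=
    fun hb => ⟨hb.1, hb.2.ne'⟩
  obtain ⟨v, c, hc, heven, hac⟩ := SimpleGraph.exists_even_cycle_of_three_neighbours
    (hB.2.1 a haB) (fun h => h.2 rfl) (hmem hb₁) (hmem hb₂) (hmem hb₃) hb₁.2 hb₂.2 hb₃.2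
    h₁₂ h₁₃ h₂₃
  exact hno ⟨v, c, hc, heven, a, haA, hac⟩
end

section
/- Let T be a tree in which every vertex has degree at most α−1 (α ≥ 2), which contains no β pairwise disjoint subtrees each with three leaves of T, and in which every path has length less than γ. Then T has fewer than 2αβ leaves. -/
/-!
Root the tree at a vertex `r`; the subtree of `v` consists of the vertices whose path to `r`
passes through `v`. Take a deepest vertex `v` whose subtree contains at least three leaves of `T`.
Each of its at most `Δ(T)` children has a subtree with at most two leaves, so the subtree of `v`
contains at most `2Δ(T) + 1 ≤ 2α - 1` leaves, and what remains after cutting it off is again a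
subtree. Repeating this `β` times turns `(2α - 1)β` leaves into `β` disjoint subtrees with three
leaves each. Nothing about leaves is used beyond their being a fixed set of marked vertices.
-/

open Finset Function

namespace SimpleGraph

variable {V : Type*} {G : SimpleGraph V}

lemma preconnected_induce_of_forall_walk {s : Set V} {x : V}
    (h : ∀ u ∈ s, ∃ p : G.Walk u x, ∀ y ∈ p.support, y ∈ s) : (G.induce s).Preconnected := by
  rintro ⟨u, hu⟩ ⟨w, hw⟩
  obtain ⟨p, hp⟩ := h u hu
  obtain ⟨q, hq⟩ := h w hw
  exact ⟨(p.append q.reverse).induce s (by simp_all [Walk.mem_support_append_iff]; grind)⟩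

lemma exists_isPath_of_preconnected_induce {s : Set V} (hs : (G.induce s).Preconnected)
    {u x : V} (hu : u ∈ s) (hx : x ∈ s) :
    ∃ p : G.Walk u x, p.IsPath ∧ ∀ y ∈ p.support, y ∈ s := by
  classical
  obtain ⟨q⟩ := hs ⟨u, hu⟩ ⟨x, hx⟩
  let p := q.map (Embedding.induce s).toHom
  refine ⟨p.bypass, p.bypass_isPath, fun y hy => ?_⟩
  obtain ⟨⟨y', hy'⟩, -, rfl⟩ :=
    List.mem_map.mp (Walk.support_map _ q ▸ p.support_bypass_subset_support hy)
  exact hy'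

/-- In a tree rooted at `r`, this is the subtree hanging from `v`. -/
def dominated (G : SimpleGraph V) (r v : V) : Set V := {u | ∀ p : G.Walk u r, v ∈ p.support}

variable {r u v w : V}

lemma self_mem_dominated : v ∈ G.dominated r v := fun p => p.start_mem_support

lemma mem_dominated_root : u ∈ G.dominated r r := fun p => p.end_mem_support

lemma mem_dominated_trans (hu : u ∈ G.dominated r w) (hw : w ∈ G.dominated r v) :
    u ∈ G.dominated r v := by
  classical
  exact fun p => p.support_dropUntil_subset_support (hu p) (hw _)

lemma dist_lt_dist_of_mem_dominated (hr : G.Reachable u r) (hu : u ∈ G.dominated r v)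
    (huv : u ≠ v) : G.dist v r < G.dist u r := by
  classical
  obtain ⟨p, hp⟩ := hr.exists_walk_length_eq_dist
  calc G.dist v r ≤ (p.dropUntil v (hu p)).length := dist_le _
    _ < p.length := p.length_dropUntil_lt_length (hu p) huv.symm
    _ = G.dist u r := hp

lemma Walk.IsPath.mem_dominated_of_mem_support {p : G.Walk u v} (hp : p.IsPath)
    (hu : u ∈ G.dominated r v) {y : V} (hy : y ∈ p.support) : y ∈ G.dominated r v := by
  classical
  intro q
  by_cases hyv : y = v
  · exact hyv ▸ q.start_mem_support
  have hv := hu ((p.takeUntil y hy).append q)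
  rw [Walk.mem_support_append_iff] at hv
  exact hv.resolve_left (Walk.endpoint_notMem_support_takeUntil hp hy (Ne.symm hyv))

lemma preconnected_induce_inter_dominated {s : Set V} (hs : (G.induce s).Preconnected)
    (hv : v ∈ s) : (G.induce (s ∩ G.dominated r v)).Preconnected := by
  refine preconnected_induce_of_forall_walk (x := v) fun u ⟨hus, hud⟩ => ?_
  obtain ⟨p, hp, hps⟩ := exists_isPath_of_preconnected_induce hs hus hv
  exact ⟨p, fun y hy => ⟨hps y hy, hp.mem_dominated_of_mem_support hud hy⟩⟩

namespace IsAcyclic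

variable (hG : G.IsAcyclic)
include hG

lemma mem_dominated_of_mem_support {p : G.Walk u r} (hp : p.IsPath) (hv : v ∈ p.support) :
    u ∈ G.dominated r v := by
  classical
  intro q
  have hq : q.bypass = p := congrArg Subtype.val
    ((hG.subsingleton_path u r).elim ⟨q.bypass, q.bypass_isPath⟩ ⟨p, hp⟩)
  exact q.support_bypass_subset_support (hq ▸ hv)

lemma exists_adj_mem_dominated {p : G.Walk u r} (hp : p.IsPath) (hv : v ∈ p.support)
    (hvu : v ≠ u) : ∃ w ∈ p.support, G.Adj v w ∧ w ∈ G.dominated r v := by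
  induction p with
  | nil => exact absurd (by simpa using hv) hvu
  | @cons u u' _ h p ih =>
    rw [Walk.support_cons, List.mem_cons] at hv
    by_cases hvu' : v = u'
    · subst hvu'
      exact ⟨u, p.support.mem_cons_self, h.symm,
        hG.mem_dominated_of_mem_support hp (by simp)⟩
    · obtain ⟨w, hw, hvw, hwd⟩ := ih hp.of_cons (hv.resolve_left hvu) hvu'
      exact ⟨w, List.mem_cons_of_mem _ hw, hvw, hwd⟩

lemma preconnected_induce_diff_dominated {s : Set V} (hs : (G.induce s).Preconnected)
    (hr : r ∈ s) : (G.induce (s \ G.dominated r v)).Preconnected := by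
  refine preconnected_induce_of_forall_walk (x := r) fun u ⟨hus, hud⟩ => ?_
  obtain ⟨p, hp, hps⟩ := exists_isPath_of_preconnected_induce hs hus hr
  exact ⟨p, fun y hy => ⟨hps y hy, fun hyd =>
    hud (mem_dominated_trans (hG.mem_dominated_of_mem_support hp hy) hyd)⟩⟩

variable [G.LocallyFinite] [DecidableEq V] (P : V → Prop) [DecidablePred P] {A : Finset V}

open scoped Classical in
lemma card_filter_dominated_le (hA : (G.induce (A : Set V)).Preconnected) (hr : r ∈ A) {k : ℕ}
    (hchild : ∀ w ∈ A, G.Adj v w → w ∈ G.dominated r v →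
      #{u ∈ {x ∈ A | x ∈ G.dominated r w} | P u} ≤ k) :
    #{u ∈ {x ∈ A | x ∈ G.dominated r v} | P u} ≤ k * G.degree v + 1 := by
  let C : Finset V := {w ∈ G.neighborFinset v | w ∈ A ∧ w ∈ G.dominated r v}
  have hsub : {u ∈ {x ∈ A | x ∈ G.dominated r v} | P u} ⊆
      insert v (C.biUnion fun w => {u ∈ {x ∈ A | x ∈ G.dominated r w} | P u}) := by
    intro u hu
    simp only [mem_filter] at hu
    obtain ⟨⟨huA, hud⟩, hPu⟩ := hu
    rcases eq_or_ne u v with rfl | huv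
    · exact mem_insert_self _ _
    obtain ⟨p, hp, hpA⟩ := exists_isPath_of_preconnected_induce hA huA hr
    obtain ⟨w, hw, hvw, hwd⟩ := hG.exists_adj_mem_dominated hp (hud p) huv.symm
    refine mem_insert_of_mem (mem_biUnion.mpr ⟨w, ?_, ?_⟩)
    · exact mem_filter.mpr ⟨(mem_neighborFinset _ _ _).mpr hvw, hpA w hw, hwd⟩
    · simpa [huA, hPu] using hG.mem_dominated_of_mem_support hp hw
  calc _ ≤ #(C.biUnion fun w => {u ∈ {x ∈ A | x ∈ G.dominated r w} | P u}) + 1 :=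
        (card_le_card hsub).trans (card_insert_le _ _)
    _ ≤ k * #C + 1 := by
        rw [mul_comm]
        gcongr
        refine card_biUnion_le_card_mul _ _ _ fun w hw => ?_
        obtain ⟨hvw, hwA, hwd⟩ := by simpa [C] using hw
        exact hchild w hwA hvw hwd
    _ ≤ k * G.degree v + 1 := by
        rw [← card_neighborFinset_eq_degree]
        gcongr
        exact filter_subset _ _

lemma exists_connected_subset_preconnected_sdiff {Δ k : ℕ} (hdeg : ∀ v, G.degree v ≤ Δ)
    (hA : (G.induce (A : Set V)).Preconnected) (hk : k + 1 ≤ #{v ∈ A | P v}) :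
    ∃ S ⊆ A, (G.induce (S : Set V)).Connected ∧ k + 1 ≤ #{v ∈ S | P v} ∧
      #{v ∈ S | P v} ≤ k * Δ + 1 ∧ (G.induce ((A \ S : Finset V) : Set V)).Preconnected := by
  classical
  obtain ⟨r, hr⟩ : A.Nonempty :=
    (card_pos.mp (by omega : 0 < #{v ∈ A | P v})).mono (filter_subset _ _)
  let piece (v : V) : Finset V := {u ∈ A | u ∈ G.dominated r v}
  -- a deepest such vertex: the subtree of each of its children has at most `k` marked vertices
  obtain ⟨v, hvc, hvmax⟩ := exists_max_image {v ∈ A | k + 1 ≤ #{u ∈ piece v | P u}}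
    (G.dist · r) ⟨r, by simpa [piece, mem_dominated_root] using ⟨hr, hk⟩⟩
  obtain ⟨hvA, hvk⟩ := mem_filter.mp hvc
  have hchild (w : V) (hwA : w ∈ A) (hvw : G.Adj v w) (hwd : w ∈ G.dominated r v) :
      #{u ∈ piece w | P u} ≤ k := by
    by_contra! hwk
    have hwr : G.Reachable w r := (hA ⟨w, hwA⟩ ⟨r, hr⟩).map (Embedding.induce _).toHom
    exact (hvmax w (mem_filter.mpr ⟨hwA, hwk⟩)).not_gt
      (dist_lt_dist_of_mem_dominated hwr hwd hvw.ne')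
  refine ⟨piece v, filter_subset _ _, ?_, hvk, ?_, ?_⟩
  · have : Nonempty (piece v : Set V) := ⟨v, mem_filter.mpr ⟨hvA, self_mem_dominated⟩⟩
    rw [coe_filter] at this ⊢
    exact Connected.mk (preconnected_induce_inter_dominated hA hvA)
  · exact (hG.card_filter_dominated_le P hA hr hchild).trans (by gcongr; exact hdeg v)
  · have : ((A \ piece v : Finset V) : Set V) = (A : Set V) \ G.dominated r v := by
      ext; simp [piece]; tauto
    rw [this]
    exact hG.preconnected_induce_diff_dominated hA hr

theorem exists_pairwise_disjoint_connected {Δ k : ℕ} (hΔ : 1 ≤ Δ)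
    (hdeg : ∀ v, G.degree v ≤ Δ) :
    ∀ (β : ℕ) (A : Finset V), (G.induce (A : Set V)).Preconnected →
      (k * Δ + 1) * β ≤ #{v ∈ A | P v} →
      ∃ S : Fin β → Finset V, Pairwise (Disjoint on S) ∧
        (∀ i, (G.induce (S i : Set V)).Connected) ∧ (∀ i, k + 1 ≤ #{v ∈ S i | P v}) ∧
        ∀ i, S i ⊆ A
  | 0, _, _, _ => ⟨Fin.elim0, nofun, nofun, nofun, nofun⟩
  | β + 1, A, hA, hm => by
    have hk : k + 1 ≤ #{v ∈ A | P v} := calc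
      k + 1 ≤ k * Δ + 1 := by gcongr; exact Nat.le_mul_of_pos_right k hΔ
      _ ≤ (k * Δ + 1) * (β + 1) := Nat.le_mul_of_pos_right _ β.succ_pos
      _ ≤ _ := hm
    obtain ⟨S, hSA, hS, hSk, hSm, hrest⟩ :=
      hG.exists_connected_subset_preconnected_sdiff P hdeg hA hk
    have hsplit : #{v ∈ A \ S | P v} + #{v ∈ S | P v} = #{v ∈ A | P v} := by
      rw [← card_union_of_disjoint (disjoint_filter_filter sdiff_disjoint), ← filter_union,
        sdiff_union_of_subset hSA]
    obtain ⟨T, hT, hTc, hTk, hTA⟩ := exists_pairwise_disjoint_connected (k := k) hΔ hdeg β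
      (A \ S) hrest (by rw [mul_add_one] at hm; omega)
    refine ⟨Fin.cons S T, pairwise_fin_succ_iff_of_isSymm.mpr ⟨fun i => ?_, hT⟩,
      Fin.cases hS hTc, Fin.cases hSk hTk, Fin.cases hSA fun i => (hTA i).trans sdiff_subset⟩
    exact disjoint_of_subset_right (hTA i) disjoint_sdiff

end IsAcyclic

end SimpleGraph

theorem few_leaves_of_no_structures_general {V : Type*} [Fintype V] [DecidableEq V]
    (G : SimpleGraph V) [DecidableRel G.Adj] (hT : G.IsTree)
    (α β : ℕ) (hα : 2 ≤ α)
    (hdeg : ∀ v : V, G.degree v ≤ α - 1)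
    (hsub : ¬ ∃ S : Fin β → Finset V,
      (∀ i j, i ≠ j → Disjoint (S i) (S j)) ∧
      (∀ i, (G.induce ((S i : Set V))).Connected) ∧
      (∀ i, 3 ≤ ((S i).filter fun v => G.degree v = 1).card)) :
    (Finset.univ.filter fun v => G.degree v = 1).card < 2 * α * β := by
  by_contra! hleaves
  have huniv : (G.induce ((Finset.univ : Finset V) : Set V)).Preconnected := by
    rw [coe_univ]
    exact G.induceUnivIso.symm.preconnected_iff.mp hT.connected.preconnected
  obtain ⟨S, hdisj, hconn, hthree, -⟩ :=
    hT.isAcyclic.exists_pairwise_disjoint_connected (k := 2) (fun v => G.degree v = 1)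
      (by omega) hdeg β Finset.univ huniv ((Nat.mul_le_mul_right β (by omega)).trans hleaves)
  exact hsub ⟨S, fun i j hij => hdisj hij, hconn, hthree⟩

/-- A tree with all degrees at most `α − 1` (where `α ≥ 2`), with no `β` disjoint subtrees
each containing three leaves, and with all paths of length less than `γ`, has fewer than
`2αβ` leaves. -/
theorem few_leaves_of_no_structures {V : Type*} [Fintype V] [DecidableEq V]
    (G : SimpleGraph V) [DecidableRel G.Adj] (hT : G.IsTree)
    (α β γ : ℕ) (hα : 2 ≤ α) (hβ : 1 ≤ β) (hγ : 1 ≤ γ)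
    (hdeg : ∀ v : V, G.degree v ≤ α - 1)
    (hsub : ¬ ∃ S : Fin β → Finset V,
      (∀ i j, i ≠ j → Disjoint (S i) (S j)) ∧
      (∀ i, (G.induce ((S i : Set V))).Connected) ∧
      (∀ i, 3 ≤ ((S i).filter fun v => G.degree v = 1).card))
    (hpath : ∀ (u w : V) (p : G.Walk u w), p.IsPath → p.length < γ) :
    (Finset.univ.filter fun v => G.degree v = 1).card < 2 * α * β :=
  few_leaves_of_no_structures_general G hT α β hα hdeg hsub
end
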